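/- Suppose Assumption H3 holds, and define, for (t,x) ∈ Z_M, R_{F,1}(t,x) = F(Q(t,x))/F(x) − 1, R_{F,2}(t,x) = F(Q(t,x))²/F(x)² − 1 and R_{D,1}(t,x) = D(Q(t,x))/D(x) − 1. Then there exists a nonnegative continuous function K : ℝ₊ → ℝ₊ such that for all (t,x) ∈ Z_M one has |R_{F,1}(t,x)| ≤ K(t) x^{γ−1}, |R_{F,2}(t,x)| ≤ K(t) x^{γ−1} and |R_{D,1}(t,x)| ≤ K(t) x^{γ−1}. -/

import Mathlib

set_option maxHeartbeats 1000000

noncomputable section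
open Set Filter

/-- The drift `F = β C₁ - α`. -/
def Fdrift (α β : ℝ → ℝ) (C1 : ℝ) : ℝ → ℝ := fun x => β x * C1 - α x

/-- The diffusion coefficient `D = β C₁ + α`. -/
def Ddiff (α β : ℝ → ℝ) (C1 : ℝ) : ℝ → ℝ := fun x => β x * C1 + α x

/-- `G(x) = ∫_M^x dy / F(y)`. -/
def Gfun (α β : ℝ → ℝ) (C1 M : ℝ) : ℝ → ℝ := fun x =>
  ∫ y in M..x, 1 / Fdrift α β C1 y

/-- Assumption H3: `α, β` smooth, nondecreasing and nonnegative (on `ℝ₊`), with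
`α^{(k)}(x) = O(x^{γ-k})`, `β^{(k)}(x) = O(x^{γ-k})` as `x → ∞` for `k = 0, 1, 2`,
`0 ≤ γ ≤ 1/2`, `C₁ > 0` fixed, and there are `M, K₋, K₊ > 0` such that
`F = β C₁ - α` is positive and increasing on `[M, ∞)` with
`K₋ x^γ ≤ F(x) ≤ K₊ x^γ` there. -/
def HypH3 (α β : ℝ → ℝ) (γ C1 M Km Kp : ℝ) : Prop :=
  ContDiff ℝ (⊤ : ℕ∞) α ∧ ContDiff ℝ (⊤ : ℕ∞) β ∧
  MonotoneOn α (Ici 0) ∧ MonotoneOn β (Ici 0) ∧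
  (∀ x ∈ Ici (0 : ℝ), 0 ≤ α x ∧ 0 ≤ β x) ∧
  0 ≤ γ ∧ γ ≤ 1 / 2 ∧
  (∀ k : ℕ, k ≤ 2 →
    ((fun x => iteratedDeriv k α x) =O[atTop] fun x : ℝ => x ^ (γ - (k : ℝ))) ∧
    ((fun x => iteratedDeriv k β x) =O[atTop] fun x : ℝ => x ^ (γ - (k : ℝ)))) ∧
  0 < C1 ∧ 0 < M ∧ 0 < Km ∧ 0 < Kp ∧
  StrictMonoOn (Fdrift α β C1) (Ici M) ∧
  ∀ x ∈ Ici M, 0 < Fdrift α β C1 x ∧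
    Km * x ^ γ ≤ Fdrift α β C1 x ∧ Fdrift α β C1 x ≤ Kp * x ^ γ

/-- `Ginv` is the inverse function `G⁻¹ : [0, ∞) → [M, ∞)` of `G`. -/
def IsGinv (α β : ℝ → ℝ) (C1 M : ℝ) (Ginv : ℝ → ℝ) : Prop :=
  (∀ x ∈ Ici M, Ginv (Gfun α β C1 M x) = x) ∧
  ∀ y ∈ Ici (0 : ℝ), Ginv y ∈ Ici M ∧ Gfun α β C1 M (Ginv y) = y

lemma derivBound {g : ℝ → ℝ} {γ M : ℝ} (hg : Continuous g)
    (hO : g =O[atTop] fun x : ℝ => x ^ (γ - 1)) (hM : 0 < M) (hγ : γ - 1 ≤ 0) :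
    ∃ C : ℝ, 0 ≤ C ∧ ∀ y, M ≤ y → |g y| ≤ C * y ^ (γ - 1) := by
  obtain ⟨c, hc⟩ := Asymptotics.isBigO_iff.mp hO
  obtain ⟨N0, hN0⟩ := eventually_atTop.mp hc
  set N := max N0 M with hN
  have hMN : M ≤ N := le_max_right _ _
  have hN0N : N0 ≤ N := le_max_left _ _
  have hNpos : 0 < N := lt_of_lt_of_le hM hMN
  have hNg : 0 < N ^ (γ - 1) := Real.rpow_pos_of_pos hNpos _
  obtain ⟨B, hB⟩ := (isCompact_Icc (a := M) (b := N)).exists_bound_of_continuousOn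
    hg.continuousOn
  set C := max (max c 0) (max B 0 / N ^ (γ - 1)) with hC
  have hC0 : 0 ≤ C := le_trans (le_max_right c 0) (le_max_left _ _)
  refine ⟨C, hC0, fun y hy => ?_⟩
  have hy0 : 0 < y := lt_of_lt_of_le hM hy
  have hyg : 0 < y ^ (γ - 1) := Real.rpow_pos_of_pos hy0 _
  rcases le_or_gt N y with h | h
  · have := hN0 y (le_trans hN0N h)
    have hnorm : ‖y ^ (γ - 1)‖ = y ^ (γ - 1) := by
      rw [Real.norm_eq_abs, abs_of_pos hyg]
    rw [hnorm, Real.norm_eq_abs] at this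
    calc |g y| ≤ c * y ^ (γ - 1) := this
      _ ≤ C * y ^ (γ - 1) := by
          apply mul_le_mul_of_nonneg_right _ hyg.le
          exact le_trans (le_max_left c 0) (le_max_left _ _)
  · have hmem : y ∈ Icc M N := ⟨hy, h.le⟩
    have h1 : |g y| ≤ max B 0 := le_trans (hB y hmem) (le_max_left B 0)
    have h2 : N ^ (γ - 1) ≤ y ^ (γ - 1) :=
      Real.rpow_le_rpow_of_nonpos hy0 h.le hγ
    have h3 : max B 0 / N ^ (γ - 1) ≤ C := le_max_right _ _
    have h4 : max B 0 = (max B 0 / N ^ (γ - 1)) * N ^ (γ - 1) := by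
      field_simp
    calc |g y| ≤ max B 0 := h1
      _ = (max B 0 / N ^ (γ - 1)) * N ^ (γ - 1) := h4
      _ ≤ (max B 0 / N ^ (γ - 1)) * y ^ (γ - 1) := by
          apply mul_le_mul_of_nonneg_left h2
          positivity
      _ ≤ C * y ^ (γ - 1) := mul_le_mul_of_nonneg_right h3 hyg.le

lemma half_rpow {x γ : ℝ} (hx : 0 < x) (hγ0 : 0 ≤ γ) :
    (x / 2) ^ (γ - 1) ≤ 2 * x ^ (γ - 1) := by
  have h1 : (x / 2 : ℝ) ^ (γ - 1) = x ^ (γ - 1) * 2 ^ (1 - γ) := by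
    rw [Real.div_rpow hx.le (by norm_num : (0:ℝ) ≤ 2), div_eq_mul_inv,
      ← Real.rpow_neg (by norm_num : (0:ℝ) ≤ 2), neg_sub]
  rw [h1]
  have h2 : (2:ℝ) ^ (1 - γ) ≤ 2 := by
    nth_rewrite 2 [← Real.rpow_one 2]
    exact Real.rpow_le_rpow_of_exponent_le (by norm_num) (by linarith)
  have h3 : 0 ≤ x ^ (γ - 1) := (Real.rpow_pos_of_pos hx _).le
  nlinarith

lemma key {f : ℝ → ℝ} {γ M Km Kp Cf t x Q : ℝ}
    (hM : 0 < M) (hKm : 0 < Km) (hKp : 0 < Kp) (hγ0 : 0 ≤ γ)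
    (hQM : M ≤ Q) (hQx : Q ≤ x) (ht : 0 ≤ t)
    (hgap : x - Q ≤ t * (Kp * x ^ γ))
    (hmono : f Q ≤ f x) (hfQ : 0 ≤ f Q) (hfx : Km * x ^ γ ≤ f x)
    (hCf : 0 ≤ Cf)
    (hlip : x / 2 ≤ Q → f x - f Q ≤ Cf * (x / 2) ^ (γ - 1) * (x - Q)) :
    |f Q / f x - 1| ≤ (2 * Kp + 2 * Cf * Kp / Km) * t * x ^ (γ - 1) := by
  have hx0 : 0 < x := lt_of_lt_of_le hM (hQM.trans hQx)
  have hxγ : 0 < x ^ γ := Real.rpow_pos_of_pos hx0 _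
  have hx1 : 0 < x ^ (γ - 1) := Real.rpow_pos_of_pos hx0 _
  have hfx0 : 0 < f x := lt_of_lt_of_le (by positivity) hfx
  have hxg1 : x ^ (γ - 1) * x = x ^ γ := by
    rw [← Real.rpow_add_one hx0.ne', sub_add_cancel]
  have habs : |f Q / f x - 1| = (f x - f Q) / f x := by
    rw [abs_of_nonpos (by rw [sub_nonpos, div_le_one hfx0]; exact hmono),
      neg_sub, sub_div, div_self hfx0.ne']
  rw [habs]
  rcases le_or_gt (t * Kp * x ^ (γ - 1)) (1 / 2) with h | h
  · have hgap2 : x - Q ≤ x / 2 := by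
      have heq : t * (Kp * x ^ γ) = (t * Kp * x ^ (γ - 1)) * x := by
        rw [← hxg1]; ring
      nlinarith
    have hQhalf : x / 2 ≤ Q := by linarith
    have hl := hlip hQhalf
    have hhalf : (x / 2) ^ (γ - 1) ≤ 2 * x ^ (γ - 1) := half_rpow hx0 hγ0
    have hxQ : 0 ≤ x - Q := by linarith
    have hnum : f x - f Q ≤ 2 * Cf * Kp * t * x ^ (γ - 1) * x ^ γ := by
      calc f x - f Q ≤ Cf * (x / 2) ^ (γ - 1) * (x - Q) := hl
        _ ≤ Cf * (2 * x ^ (γ - 1)) * (x - Q) := by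
            apply mul_le_mul_of_nonneg_right _ hxQ
            exact mul_le_mul_of_nonneg_left hhalf hCf
        _ ≤ Cf * (2 * x ^ (γ - 1)) * (t * (Kp * x ^ γ)) := by
            apply mul_le_mul_of_nonneg_left hgap
            positivity
        _ = 2 * Cf * Kp * t * x ^ (γ - 1) * x ^ γ := by ring
    rw [div_le_iff₀ hfx0]
    calc f x - f Q ≤ 2 * Cf * Kp * t * x ^ (γ - 1) * x ^ γ := hnum
      _ = (2 * Cf * Kp / Km) * t * x ^ (γ - 1) * (Km * x ^ γ) := by
          field_simp
      _ ≤ (2 * Kp + 2 * Cf * Kp / Km) * t * x ^ (γ - 1) * (Km * x ^ γ) := by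
          have : (0:ℝ) ≤ 2 * Kp * t * x ^ (γ - 1) * (Km * x ^ γ) := by positivity
          nlinarith
      _ ≤ (2 * Kp + 2 * Cf * Kp / Km) * t * x ^ (γ - 1) * f x := by
          apply mul_le_mul_of_nonneg_left hfx
          positivity
  · have h1 : (f x - f Q) / f x ≤ 1 := by
      rw [div_le_one hfx0]; linarith
    have h2 : (1:ℝ) ≤ 2 * Kp * t * x ^ (γ - 1) := by nlinarith
    have h3 : (0:ℝ) ≤ (2 * Cf * Kp / Km) * t * x ^ (γ - 1) := by positivity
    calc (f x - f Q) / f x ≤ 1 := h1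
      _ ≤ (2 * Kp + 2 * Cf * Kp / Km) * t * x ^ (γ - 1) := by nlinarith

/-- Under H3, with `Q(t,x) = G⁻¹(G(x) - t)` on `Z_M = {(t,x) : t ≥ 0, x ≥ M, t ≤ G(x)}`,
the remainders `R_{F,1} = F(Q(t,x))/F(x) - 1`, `R_{F,2} = F(Q(t,x))²/F(x)² - 1` and
`R_{D,1} = D(Q(t,x))/D(x) - 1` satisfy `|R| ≤ K(t) x^{γ-1}` on `Z_M` for some
nonnegative continuous `K : ℝ₊ → ℝ₊`. -/
theorem stmt13 (α β : ℝ → ℝ) (γ C1 M Km Kp : ℝ) (h3 : HypH3 α β γ C1 M Km Kp)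
    (Ginv : ℝ → ℝ) (hGinv : IsGinv α β C1 M Ginv) :
    ∃ K : ℝ → ℝ, ContinuousOn K (Ici 0) ∧ (∀ t ∈ Ici (0 : ℝ), 0 ≤ K t) ∧
      ∀ t x : ℝ, 0 ≤ t → M ≤ x → t ≤ Gfun α β C1 M x →
        |Fdrift α β C1 (Ginv (Gfun α β C1 M x - t)) / Fdrift α β C1 x - 1| ≤
            K t * x ^ (γ - 1) ∧
        |(Fdrift α β C1 (Ginv (Gfun α β C1 M x - t))) ^ 2 / (Fdrift α β C1 x) ^ 2 - 1| ≤
            K t * x ^ (γ - 1) ∧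
        |Ddiff α β C1 (Ginv (Gfun α β C1 M x - t)) / Ddiff α β C1 x - 1| ≤
            K t * x ^ (γ - 1) := by
  obtain ⟨hα, hβ, hαm, hβm, hnn, hγ0, hγhalf, hO, hC1, hM, hKm, hKp, hFsm, hF⟩ := h3
  have hγ1 : γ - 1 ≤ 0 := by linarith
  have hαd : Differentiable ℝ α := hα.differentiable (by simp)
  have hβd : Differentiable ℝ β := hβ.differentiable (by simp)
  have hFc : Continuous (Fdrift α β C1) := by
    unfold Fdrift; exact (hβ.continuous.mul continuous_const).sub hα.continuous
  have hFd : Differentiable ℝ (Fdrift α β C1) := by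
    unfold Fdrift; exact (hβd.mul_const C1).sub hαd
  have hDd : Differentiable ℝ (Ddiff α β C1) := by
    unfold Ddiff; exact (hβd.mul_const C1).add hαd
  have hdF : ∀ y, deriv (Fdrift α β C1) y = deriv β y * C1 - deriv α y := by
    intro y
    unfold Fdrift
    rw [deriv_fun_sub ((hβd y).mul_const C1) (hαd y), deriv_mul_const (hβd y)]
  have hdD : ∀ y, deriv (Ddiff α β C1) y = deriv β y * C1 + deriv α y := by
    intro y
    unfold Ddiff
    rw [deriv_fun_add ((hβd y).mul_const C1) (hαd y), deriv_mul_const (hβd y)]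
  obtain ⟨hα1, hβ1⟩ := hO 1 (by norm_num)
  simp only [iteratedDeriv_one, Nat.cast_one] at hα1 hβ1
  have hdFO : (deriv (Fdrift α β C1)) =O[atTop] fun x : ℝ => x ^ (γ - 1) := by
    have h1 : (fun y => C1 * deriv β y - deriv α y) =O[atTop] fun x : ℝ => x ^ (γ - 1) :=
      (hβ1.const_mul_left C1).sub hα1
    exact h1.congr_left fun y => by rw [hdF y]; ring
  have hdDO : (deriv (Ddiff α β C1)) =O[atTop] fun x : ℝ => x ^ (γ - 1) := by
    have h1 : (fun y => C1 * deriv β y + deriv α y) =O[atTop] fun x : ℝ => x ^ (γ - 1) :=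
      (hβ1.const_mul_left C1).add hα1
    exact h1.congr_left fun y => by rw [hdD y]; ring
  have hdFc : Continuous (deriv (Fdrift α β C1)) := by
    have : deriv (Fdrift α β C1) = fun y => deriv β y * C1 - deriv α y := funext hdF
    rw [this]
    exact ((hβ.continuous_deriv (by simp)).mul continuous_const).sub (hα.continuous_deriv (by simp))
  have hdDc : Continuous (deriv (Ddiff α β C1)) := by
    have : deriv (Ddiff α β C1) = fun y => deriv β y * C1 + deriv α y := funext hdD
    rw [this]
    exact ((hβ.continuous_deriv (by simp)).mul continuous_const).add (hα.continuous_deriv (by simp))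
  obtain ⟨CF, hCF0, hCFb⟩ := derivBound hdFc hdFO hM hγ1
  obtain ⟨CD, hCD0, hCDb⟩ := derivBound hdDc hdDO hM hγ1
  set AF := 2 * Kp + 2 * CF * Kp / Km with hAF
  set AD := 2 * Kp + 2 * CD * Kp / Km with hAD
  have hAF0 : 0 ≤ AF := by positivity
  have hAD0 : 0 ≤ AD := by positivity
  refine ⟨fun t => (2 * AF + AD) * t, (continuous_const.mul continuous_id).continuousOn,
    fun t ht => mul_nonneg (by positivity) ht, ?_⟩
  intro t x ht hx hle
  -- basic facts about Q
  have hts : 0 ≤ Gfun α β C1 M x - t := by linarith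
  obtain ⟨hQM', hGQ⟩ := hGinv.2 _ hts
  set Q := Ginv (Gfun α β C1 M x - t) with hQdef
  have hQM : M ≤ Q := hQM'
  have hx0 : 0 < x := lt_of_lt_of_le hM hx
  have hQ0 : 0 < Q := lt_of_lt_of_le hM hQM
  -- integrability
  have hint : ∀ a b : ℝ, M ≤ a → a ≤ b →
      IntervalIntegrable (fun y => 1 / Fdrift α β C1 y) MeasureTheory.volume a b := by
    intro a b ha hab
    apply ContinuousOn.intervalIntegrable_of_Icc hab
    apply ContinuousOn.div continuousOn_const hFc.continuousOn
    intro y hy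
    exact (hF y (le_trans ha hy.1)).1.ne'
  -- G strict mono
  have hGmono : StrictMonoOn (Gfun α β C1 M) (Ici M) := by
    intro a ha b hb hab
    have hdiff : Gfun α β C1 M b - Gfun α β C1 M a = ∫ y in a..b, 1 / Fdrift α β C1 y :=
      intervalIntegral.integral_interval_sub_left (hint M b le_rfl hb) (hint M a le_rfl ha)
    have hpos : 0 < ∫ y in a..b, 1 / Fdrift α β C1 y := by
      apply intervalIntegral.intervalIntegral_pos_of_pos_on (hint a b ha hab.le) _ hab
      intro y hy
      exact one_div_pos.mpr (hF y (le_trans ha hy.1.le)).1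
    linarith
  have hQx : Q ≤ x := by
    by_contra hcon
    push_neg at hcon
    have := hGmono (mem_Ici.mpr hx) (mem_Ici.mpr hQM) hcon
    rw [hGQ] at this
    linarith
  have hFxf := hF x (mem_Ici.mpr hx)
  have hFQf := hF Q (mem_Ici.mpr hQM)
  -- t as an integral
  have hteq : t = ∫ y in Q..x, 1 / Fdrift α β C1 y := by
    have hsub : Gfun α β C1 M x - Gfun α β C1 M Q = ∫ y in Q..x, 1 / Fdrift α β C1 y :=
      intervalIntegral.integral_interval_sub_left (hint M x le_rfl hx)
        (hint M Q le_rfl hQM)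
    rw [hGQ] at hsub
    linarith
  -- gap bound
  have hgap : x - Q ≤ t * (Kp * x ^ γ) := by
    have hlow : (x - Q) * (1 / Fdrift α β C1 x) ≤ t := by
      rw [hteq]
      have hconst : ∫ _ in Q..x, (1 / Fdrift α β C1 x) = (x - Q) * (1 / Fdrift α β C1 x) := by
        simp [intervalIntegral.integral_const, smul_eq_mul]
      rw [← hconst]
      apply intervalIntegral.integral_mono_on hQx intervalIntegrable_const (hint Q x hQM hQx)
      intro y hy
      exact one_div_le_one_div_of_le (hF y (mem_Ici.mpr (hQM.trans hy.1))).1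
        (hFsm.monotoneOn (mem_Ici.mpr (hQM.trans hy.1)) (mem_Ici.mpr hx) hy.2)
    have h1 : x - Q ≤ t * Fdrift α β C1 x := by
      rw [mul_one_div, div_le_iff₀ hFxf.1] at hlow
      linarith
    calc x - Q ≤ t * Fdrift α β C1 x := h1
      _ ≤ t * (Kp * x ^ γ) := mul_le_mul_of_nonneg_left hFxf.2.2 ht
  -- Lipschitz bounds
  have hlipgen : ∀ (f : ℝ → ℝ) (Cf : ℝ), 0 ≤ Cf → Differentiable ℝ f →
      (∀ y, M ≤ y → |deriv f y| ≤ Cf * y ^ (γ - 1)) →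
      (x / 2 ≤ Q → f x - f Q ≤ Cf * (x / 2) ^ (γ - 1) * (x - Q)) := by
    intro f Cf hCf hfd hfb hhalf
    have hb : ∀ y ∈ Icc Q x, ‖deriv f y‖ ≤ Cf * (x / 2) ^ (γ - 1) := by
      intro y hy
      have h1 : |deriv f y| ≤ Cf * y ^ (γ - 1) := hfb y (hQM.trans hy.1)
      have h2 : y ^ (γ - 1) ≤ (x / 2) ^ (γ - 1) :=
        Real.rpow_le_rpow_of_nonpos (by linarith) (hhalf.trans hy.1) hγ1
      rw [Real.norm_eq_abs]
      exact h1.trans (mul_le_mul_of_nonneg_left h2 hCf)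
    have hmvt := (convex_Icc Q x).norm_image_sub_le_of_norm_deriv_le
      (fun y _ => hfd y) hb (left_mem_Icc.mpr hQx) (right_mem_Icc.mpr hQx)
    rw [Real.norm_eq_abs, Real.norm_eq_abs, abs_of_nonneg (by linarith : (0:ℝ) ≤ x - Q)]
      at hmvt
    calc f x - f Q ≤ |f x - f Q| := le_abs_self _
      _ ≤ Cf * (x / 2) ^ (γ - 1) * (x - Q) := hmvt
  -- apply the key lemma to F
  have hxnn : (0:ℝ) ≤ x := hx0.le
  have hQnn : (0:ℝ) ≤ Q := hQ0.le
  have hFmonoQx : Fdrift α β C1 Q ≤ Fdrift α β C1 x :=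
    hFsm.monotoneOn (mem_Ici.mpr hQM) (mem_Ici.mpr hx) hQx
  have bF : |Fdrift α β C1 Q / Fdrift α β C1 x - 1| ≤ AF * t * x ^ (γ - 1) :=
    key hM hKm hKp hγ0 hQM hQx ht hgap hFmonoQx hFQf.1.le hFxf.2.1 hCF0
      (hlipgen _ CF hCF0 hFd hCFb)
  -- apply the key lemma to D
  have hDmono : Ddiff α β C1 Q ≤ Ddiff α β C1 x := by
    unfold Ddiff
    have h1 := hβm (mem_Ici.mpr hQnn) (mem_Ici.mpr hxnn) hQx
    have h2 := hαm (mem_Ici.mpr hQnn) (mem_Ici.mpr hxnn) hQx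
    nlinarith
  have hDQ0 : 0 ≤ Ddiff α β C1 Q := by
    have := hnn Q (mem_Ici.mpr hQnn)
    unfold Ddiff
    nlinarith
  have hDxlow : Km * x ^ γ ≤ Ddiff α β C1 x := by
    have h1 := (hnn x (mem_Ici.mpr hxnn)).1
    have h2 := hFxf.2.1
    unfold Ddiff
    unfold Fdrift at h2
    linarith
  have bD : |Ddiff α β C1 Q / Ddiff α β C1 x - 1| ≤ AD * t * x ^ (γ - 1) :=
    key hM hKm hKp hγ0 hQM hQx ht hgap hDmono hDQ0 hDxlow hCD0
      (hlipgen _ CD hCD0 hDd hCDb)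
  -- squared bound
  have hx1 : 0 < x ^ (γ - 1) := Real.rpow_pos_of_pos hx0 _
  have hFx0 : 0 < Fdrift α β C1 x := hFxf.1
  have bF2 : |(Fdrift α β C1 Q) ^ 2 / (Fdrift α β C1 x) ^ 2 - 1| ≤
      2 * (AF * t * x ^ (γ - 1)) := by
    have heq : (Fdrift α β C1 Q) ^ 2 / (Fdrift α β C1 x) ^ 2 - 1 =
        (Fdrift α β C1 Q / Fdrift α β C1 x - 1) * (Fdrift α β C1 Q / Fdrift α β C1 x + 1) := by
      field_simp
      ring
    rw [heq, abs_mul]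
    have hr0 : 0 ≤ Fdrift α β C1 Q / Fdrift α β C1 x := div_nonneg hFQf.1.le hFx0.le
    have hr1 : Fdrift α β C1 Q / Fdrift α β C1 x ≤ 1 := (div_le_one hFx0).mpr hFmonoQx
    have habs2 : |Fdrift α β C1 Q / Fdrift α β C1 x + 1| ≤ 2 := by
      rw [abs_of_nonneg (by linarith)]
      linarith
    calc |Fdrift α β C1 Q / Fdrift α β C1 x - 1| * |Fdrift α β C1 Q / Fdrift α β C1 x + 1|
        ≤ (AF * t * x ^ (γ - 1)) * 2 :=
          mul_le_mul bF habs2 (abs_nonneg _) (mul_nonneg (mul_nonneg hAF0 ht) (Real.rpow_pos_of_pos hx0 _).le)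
      _ = 2 * (AF * t * x ^ (γ - 1)) := by ring
  have hnonnegF : 0 ≤ AF * t * x ^ (γ - 1) := mul_nonneg (mul_nonneg hAF0 ht) hx1.le
  have hnonnegD : 0 ≤ AD * t * x ^ (γ - 1) := mul_nonneg (mul_nonneg hAD0 ht) hx1.le
  refine ⟨?_, ?_, ?_⟩
  · calc |Fdrift α β C1 Q / Fdrift α β C1 x - 1| ≤ AF * t * x ^ (γ - 1) := bF
      _ ≤ (2 * AF + AD) * t * x ^ (γ - 1) := by nlinarith
  · calc |(Fdrift α β C1 Q) ^ 2 / (Fdrift α β C1 x) ^ 2 - 1| ≤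
        2 * (AF * t * x ^ (γ - 1)) := bF2
      _ ≤ (2 * AF + AD) * t * x ^ (γ - 1) := by nlinarith
  · calc |Ddiff α β C1 Q / Ddiff α β C1 x - 1| ≤ AD * t * x ^ (γ - 1) := bD
      _ ≤ (2 * AF + AD) * t * x ^ (γ - 1) := by nlinarith
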